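/- Let V be a 5-dimensional vector space over a field k of characteristic zero, let ω be an alternating bilinear form on V whose radical has dimension 1 (i.e. ω has rank 4), and let V₄ ⊆ V be a 4-dimensional subspace on which ω restricts to a nondegenerate form. Let v ∈ V₄ be a nonzero vector, let v^⊥ = {u ∈ V : ω(v,u) = 0}, and let π : V → V/span(v) be the quotient map. Then v^⊥ is a 4-dimensional subspace containing v, and the assignment A ↦ π(A) defines a bijection from the set of 2-dimensional ω-isotropic subspaces A ⊆ V with A ∩ V₄ = span(v) onto the set of 1-dimensional subspaces L of V/span(v) with L ⊆ π(v^⊥) and L ⊄ π(v^⊥ ∩ V₄). -/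

import Mathlib

/-!
Nondegeneracy on `V₄` makes `ω v` a nonzero functional, so `v^⊥` is a hyperplane. Every `A` in the source contains `span v`, so by the correspondence theorem for quotients
`A ↦ π(A)` is injective there, and it remains to check that a subspace `A ⊇ span v` lies in the
source iff `π(A)` lies in the target. Passing to the quotient lowers dimensions by one; a plane
through `v` is isotropic iff it lies in `v^⊥`, because `ω` is alternating; and for such a plane,
`span v ⊆ A ∩ V₄ ⊆ A` with `A` one dimension larger, so `A ∩ V₄ = span v` iff `A ⊄ V₄`.
-/

open Module

namespace Submodule

section Ring

variable {R M : Type*} [Ring R] [AddCommGroup M] [Module R M] {p : Submodule R M}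

theorem map_mkQ_le_map_mkQ_iff {A B : Submodule R M} (hB : p ≤ B) :
    A.map p.mkQ ≤ B.map p.mkQ ↔ A ≤ B := by
  rw [LinearMap.map_le_map_iff, ker_mkQ, sup_eq_left.2 hB]

theorem bijOn_map_mkQ {S : Set (Submodule R M)} {T : Set (Submodule R (M ⧸ p))}
    (hS : ∀ A ∈ S, p ≤ A) (hST : ∀ A, p ≤ A → (A ∈ S ↔ A.map p.mkQ ∈ T)) :
    Set.BijOn (fun A => A.map p.mkQ) S T := by
  refine ⟨fun A hA => (hST A (hS A hA)).1 hA, fun A₁ hA₁ A₂ hA₂ heq => ?_, fun L hL => ?_⟩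
  · simpa [comap_map_mkQ, sup_eq_right.2 (hS _ hA₁), sup_eq_right.2 (hS _ hA₂)] using
      congrArg (comap p.mkQ) heq
  · have hmap : (L.comap p.mkQ).map p.mkQ = L := map_comap_eq_of_surjective (mkQ_surjective p) L
    exact ⟨L.comap p.mkQ, (hST _ (le_comap_mkQ p L)).2 (by rwa [hmap]), hmap⟩

end Ring

variable {K V : Type*} [DivisionRing K] [AddCommGroup V] [Module K V] [FiniteDimensional K V]
  {p A : Submodule K V}

theorem finrank_map_mkQ_add_finrank (h : p ≤ A) :
    finrank K (A.map p.mkQ) + finrank K p = finrank K A := by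
  have h1 := LinearMap.finrank_range_add_finrank_ker (p.mkQ.domRestrict A)
  have hker : LinearMap.ker (p.mkQ.domRestrict A) = p.comap A.subtype := by
    ext x
    simp [Quotient.mk_eq_zero]
  rwa [LinearMap.range_domRestrict, hker, (comapSubtypeEquivOfLe h).finrank_eq] at h1

theorem eq_or_eq_of_le_of_le_of_finrank_eq_add_one {B : Submodule K V} (hpB : p ≤ B)
    (hBA : B ≤ A) (hA : finrank K A = finrank K p + 1) : B = p ∨ B = A := by
  have hp := finrank_mono hpB
  have hB := finrank_mono hBA
  rcases (show finrank K B = finrank K p ∨ finrank K B = finrank K A by omega) with h | h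
  · exact Or.inl (eq_of_le_of_finrank_eq hpB h.symm).symm
  · exact Or.inr (eq_of_le_of_finrank_eq hBA h)

theorem inf_eq_iff_not_le_of_finrank_eq_add_one {U : Submodule K V} (hpA : p ≤ A) (hpU : p ≤ U)
    (hA : finrank K A = finrank K p + 1) : A ⊓ U = p ↔ ¬ A ≤ U := by
  refine ⟨fun h hAU => ?_, fun hAU => ?_⟩
  · rw [inf_eq_left.2 hAU] at h
    rw [h] at hA
    omega
  · exact (eq_or_eq_of_le_of_le_of_finrank_eq_add_one (le_inf hpA hpU) inf_le_left
      hA).resolve_right fun h => hAU (inf_eq_left.1 h)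

end Submodule

namespace LinearMap.IsAlt

section CommRing

variable {R M : Type*} [CommRing R] [AddCommGroup M] [Module R M] {B : M →ₗ[R] M →ₗ[R] R}

theorem apply_eq_zero_of_mem_span_pair (hB : B.IsAlt) {u w x y : M} (huw : B u w = 0)
    (hx : x ∈ Submodule.span R {u, w}) (hy : y ∈ Submodule.span R {u, w}) : B x y = 0 := by
  have hwu : B w u = 0 := hB.eq_iff.1 huw
  obtain ⟨a, b, rfl⟩ := Submodule.mem_span_pair.1 hx
  obtain ⟨c, d, rfl⟩ := Submodule.mem_span_pair.1 hy
  simp [hB.self_eq_zero, huw, hwu]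

end CommRing

variable {K V : Type*} [Field K] [AddCommGroup V] [Module K V] [FiniteDimensional K V]
  {B : V →ₗ[K] V →ₗ[K] K}

/-- A plane through `v` inside `v^⊥` is spanned by `v` and one vector orthogonal to it. -/
theorem isotropic_of_finrank_eq_two (hB : B.IsAlt) {v : V} (hv : v ≠ 0) {A : Submodule K V}
    (hvA : K ∙ v ≤ A) (hA : finrank K A = 2) (hAv : A ≤ LinearMap.ker (B v)) :
    ∀ x ∈ A, ∀ y ∈ A, B x y = 0 := by
  have hA' : finrank K A = finrank K (K ∙ v) + 1 := by rw [finrank_span_singleton hv, hA]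
  have hlt : K ∙ v < A := lt_of_le_of_ne hvA fun h => by rw [← h] at hA'; omega
  obtain ⟨u, huA, hu⟩ := SetLike.exists_of_lt hlt
  have hspan : Submodule.span K {v, u} = A := by
    rw [Submodule.span_insert]
    refine (Submodule.eq_or_eq_of_le_of_le_of_finrank_eq_add_one le_sup_left
      (sup_le hvA ((Submodule.span_singleton_le_iff_mem u A).2 huA)) hA').resolve_left ?_
    exact fun h => hu (h ▸ Submodule.mem_sup_right (Submodule.mem_span_singleton_self u))
  intro x hx y hy
  exact hB.apply_eq_zero_of_mem_span_pair (hAv huA) (hspan ▸ hx) (hspan ▸ hy)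

theorem isotropic_iff_le_ker_of_finrank_eq_two (hB : B.IsAlt) {v : V} (hv : v ≠ 0)
    {A : Submodule K V} (hvA : K ∙ v ≤ A) (hA : finrank K A = 2) :
    (∀ x ∈ A, ∀ y ∈ A, B x y = 0) ↔ A ≤ LinearMap.ker (B v) :=
  ⟨fun h a ha => h v (hvA (Submodule.mem_span_singleton_self v)) a ha,
    hB.isotropic_of_finrank_eq_two hv hvA hA⟩

end LinearMap.IsAlt

open Submodule in
theorem isotropic_plane_iff_map_mkQ {K V : Type*} [Field K] [AddCommGroup V] [Module K V]
    [FiniteDimensional K V] {B : V →ₗ[K] V →ₗ[K] K} (hB : B.IsAlt) {v : V} (hv : v ≠ 0)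
    {U : Submodule K V} (hvU : v ∈ U) {A : Submodule K V} (hvA : K ∙ v ≤ A) :
    (finrank K A = 2 ∧ (∀ x ∈ A, ∀ y ∈ A, B x y = 0) ∧ A ⊓ U = K ∙ v) ↔
      (finrank K (A.map (K ∙ v).mkQ) = 1 ∧
        A.map (K ∙ v).mkQ ≤ (LinearMap.ker (B v)).map (K ∙ v).mkQ ∧
        ¬ A.map (K ∙ v).mkQ ≤ (LinearMap.ker (B v) ⊓ U).map (K ∙ v).mkQ) := by
  have hvW : K ∙ v ≤ LinearMap.ker (B v) :=
    (span_singleton_le_iff_mem _ _).2 (hB.self_eq_zero v)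
  have hvU' : K ∙ v ≤ U := (span_singleton_le_iff_mem _ _).2 hvU
  have hdim := finrank_map_mkQ_add_finrank hvA
  rw [finrank_span_singleton hv] at hdim
  rw [map_mkQ_le_map_mkQ_iff hvW, map_mkQ_le_map_mkQ_iff (le_inf hvW hvU'),
    show finrank K A = 2 ↔ finrank K (A.map (K ∙ v).mkQ) = 1 by omega]
  refine and_congr_right fun h1 => ?_
  have hA : finrank K A = 2 := by omega
  rw [hB.isotropic_iff_le_ker_of_finrank_eq_two hv hvA hA]
  refine and_congr_right fun hAW => ?_
  rw [inf_eq_iff_not_le_of_finrank_eq_add_one hvA hvU' (by rw [finrank_span_singleton hv, hA]),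
    le_inf_iff, not_and, imp_iff_right hAW]

theorem stmt4_general {k V : Type*} [Field k] [AddCommGroup V] [Module k V]
    [FiniteDimensional k V] (hV : finrank k V = 5)
    (ω : V →ₗ[k] V →ₗ[k] k) (halt : ∀ x : V, ω x x = 0)
    (V₄ : Submodule k V)
    (hnd : ∀ x ∈ V₄, (∀ y ∈ V₄, ω x y = 0) → x = 0)
    (v : V) (hv : v ≠ 0) (hvV₄ : v ∈ V₄) :
    finrank k (LinearMap.ker (ω v)) = 4 ∧ v ∈ LinearMap.ker (ω v) ∧
    Set.BijOn (fun A : Submodule k V => A.map (Submodule.mkQ (k ∙ v)))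
      {A : Submodule k V | finrank k A = 2 ∧ (∀ x ∈ A, ∀ y ∈ A, ω x y = 0) ∧
        A ⊓ V₄ = (k ∙ v)}
      {L : Submodule k (V ⧸ (k ∙ v)) | finrank k L = 1 ∧
        L ≤ (LinearMap.ker (ω v)).map (Submodule.mkQ (k ∙ v)) ∧
        ¬ L ≤ (LinearMap.ker (ω v) ⊓ V₄).map (Submodule.mkQ (k ∙ v))} := by
  have hωv : ω v ≠ 0 := fun h => hv (hnd v hvV₄ fun y _ => by simp [h])
  have hker := Module.Dual.finrank_ker_add_one_of_ne_zero hωv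
  refine ⟨by omega, halt v, Submodule.bijOn_map_mkQ (fun A hA => hA.2.2 ▸ inf_le_left) ?_⟩
  exact fun A hvA => isotropic_plane_iff_map_mkQ halt hv hvV₄ hvA

/-- Let `ω` be an alternating bilinear form of rank 4 (1-dimensional radical) on a
5-dimensional vector space over a field of characteristic zero, let `V₄` be a 4-dimensional
subspace on which `ω` restricts to a nondegenerate form, let `0 ≠ v ∈ V₄`, let
`v^⊥ = ker (ω v)`, and let `π : V → V / span v` be the quotient map. Then `v^⊥` is a
4-dimensional subspace containing `v`, and `A ↦ π(A)` is a bijection from the set of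
2-dimensional `ω`-isotropic subspaces `A` of `V` with `A ∩ V₄ = span v` onto the set of
1-dimensional subspaces `L` of `V / span v` with `L ⊆ π(v^⊥)` and `L ⊄ π(v^⊥ ∩ V₄)`. -/
theorem stmt4 {k V : Type*} [Field k] [CharZero k] [AddCommGroup V] [Module k V]
    [FiniteDimensional k V] (hV : finrank k V = 5)
    (ω : V →ₗ[k] V →ₗ[k] k) (halt : ∀ x : V, ω x x = 0)
    (hrad : finrank k (LinearMap.ker ω) = 1)
    (V₄ : Submodule k V) (hV₄ : finrank k V₄ = 4)
    (hnd : ∀ x ∈ V₄, (∀ y ∈ V₄, ω x y = 0) → x = 0)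
    (v : V) (hv : v ≠ 0) (hvV₄ : v ∈ V₄) :
    finrank k (LinearMap.ker (ω v)) = 4 ∧ v ∈ LinearMap.ker (ω v) ∧
    Set.BijOn (fun A : Submodule k V => A.map (Submodule.mkQ (k ∙ v)))
      {A : Submodule k V | finrank k A = 2 ∧ (∀ x ∈ A, ∀ y ∈ A, ω x y = 0) ∧
        A ⊓ V₄ = (k ∙ v)}
      {L : Submodule k (V ⧸ (k ∙ v)) | finrank k L = 1 ∧
        L ≤ (LinearMap.ker (ω v)).map (Submodule.mkQ (k ∙ v)) ∧
        ¬ L ≤ (LinearMap.ker (ω v) ⊓ V₄).map (Submodule.mkQ (k ∙ v))} :=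
  stmt4_general hV ω halt V₄ hnd v hv hvV₄
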